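/- In any orthomodular lattice, if a commutes with b and a commutes with c, then (a ∪₃ b) ∪₃ c = a ∪₃ (b ∪₃ c), where x ∪₃ y := (x ∩ y) ∪ (x ∩ y') ∪ (x' ∩ (x ∪ y)). -/

import Mathlib

class Ortholattice (α : Type*) extends Lattice α, BoundedOrder α, Compl α where
  compl_compl : ∀ a : α, aᶜᶜ = a
  sup_compl : ∀ a : α, a ⊔ aᶜ = ⊤
  inf_compl : ∀ a : α, a ⊓ aᶜ = ⊥
  compl_antitone : ∀ a b : α, a ≤ b → bᶜ ≤ aᶜ

class OrthomodularLattice (α : Type*) extends Ortholattice α where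
  orthomodular : ∀ a b : α, a ≤ b → b = a ⊔ (aᶜ ⊓ b)

namespace OMLx

variable {α : Type*} [OrthomodularLattice α]

lemma cc (a : α) : aᶜᶜ = a := Ortholattice.compl_compl a
lemma anti {a b : α} (h : a ≤ b) : bᶜ ≤ aᶜ := Ortholattice.compl_antitone a b h
lemma lcc {a b : α} (h : a ≤ bᶜ) : b ≤ aᶜ := cc b ▸ anti h
lemma infc (a : α) : a ⊓ aᶜ = ⊥ := Ortholattice.inf_compl a
lemma om {a b : α} (h : a ≤ b) : b = a ⊔ (aᶜ ⊓ b) := OrthomodularLattice.orthomodular a b h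
lemma eqbot {a b : α} (h1 : a ≤ b) (h2 : a ≤ bᶜ) : a = ⊥ :=
  le_antisymm (le_trans (le_inf h1 h2) (infc b).le) bot_le
lemma dm_sup (a b : α) : (a ⊔ b)ᶜ = aᶜ ⊓ bᶜ :=
  le_antisymm (le_inf (anti le_sup_left) (anti le_sup_right))
    (lcc (sup_le (lcc inf_le_left) (lcc inf_le_right)))
lemma dm_inf (a b : α) : (a ⊓ b)ᶜ = aᶜ ⊔ bᶜ := by
  conv_lhs => rw [← cc a, ← cc b, ← dm_sup, cc]

def Cm (a b : α) : Prop := a = (a ⊓ b) ⊔ (a ⊓ bᶜ)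

lemma Cm.eq {a b : α} (h : Cm a b) : a = (a ⊓ b) ⊔ (a ⊓ bᶜ) := h

lemma Cm.complr {a b : α} (h : Cm a b) : Cm a bᶜ := by
  unfold Cm at *; rw [cc, sup_comm]; exact h

lemma Cm.symm {a b : α} (h : Cm a b) : Cm b a := by
  have h1 : b = (a ⊓ b) ⊔ ((a ⊓ b)ᶜ ⊓ b) := om inf_le_right
  have hx : (a ⊓ b)ᶜ ⊓ b ≤ aᶜ := by
    have h2 : (a ⊓ b)ᶜ ⊓ b ≤ (a ⊓ b)ᶜ ⊓ (a ⊓ bᶜ)ᶜ :=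
      le_inf inf_le_left (le_trans inf_le_right (lcc inf_le_right))
    rwa [← dm_sup, ← h.eq] at h2
  refine le_antisymm ?_ (sup_le inf_le_left inf_le_left)
  calc b = (a ⊓ b) ⊔ ((a ⊓ b)ᶜ ⊓ b) := h1
    _ ≤ (b ⊓ a) ⊔ (b ⊓ aᶜ) :=
      sup_le (le_sup_of_le_left (le_inf inf_le_right inf_le_left))
        (le_sup_of_le_right (le_inf inf_le_right hx))

lemma Cm.compll {a b : α} (h : Cm a b) : Cm aᶜ b := (h.symm.complr).symm

lemma cm_self (a : α) : Cm a a := by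
  unfold Cm; rw [inf_idem, infc, sup_bot_eq]

lemma cm_compl (a : α) : Cm a aᶜ := by
  unfold Cm; rw [cc, infc, bot_sup_eq, inf_idem]

lemma cm_of_le {a b : α} (h : a ≤ b) : Cm a b := by
  unfold Cm; rw [inf_eq_left.mpr h]; exact (sup_eq_left.mpr inf_le_left).symm

lemma fh_inf {a b c : α} (hb : Cm a b) (hc : Cm a c) :
    a ⊓ (b ⊔ c) = (a ⊓ b) ⊔ (a ⊓ c) := by
  have hd : (a ⊓ b) ⊔ (a ⊓ c) ≤ a ⊓ (b ⊔ c) :=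
    sup_le (le_inf inf_le_left (le_sup_of_le_left inf_le_right))
      (le_inf inf_le_left (le_sup_of_le_right inf_le_right))
  have h1 := om hd
  set z := ((a ⊓ b) ⊔ (a ⊓ c))ᶜ ⊓ (a ⊓ (b ⊔ c)) with hzdef
  have hzb : z ≤ bᶜ := by
    have eb : b = (b ⊓ a) ⊔ (b ⊓ aᶜ) := hb.symm
    have hz1 : z ≤ (b ⊓ a)ᶜ := by
      rw [inf_comm b a]; exact le_trans inf_le_left (anti le_sup_left)
    have hz2 : z ≤ (b ⊓ aᶜ)ᶜ :=
      le_trans inf_le_right (le_trans inf_le_left (lcc inf_le_right))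
    rw [eb, dm_sup]; exact le_inf hz1 hz2
  have hzc : z ≤ cᶜ := by
    have ec : c = (c ⊓ a) ⊔ (c ⊓ aᶜ) := hc.symm
    have hz1 : z ≤ (c ⊓ a)ᶜ := by
      rw [inf_comm c a]; exact le_trans inf_le_left (anti le_sup_right)
    have hz2 : z ≤ (c ⊓ aᶜ)ᶜ :=
      le_trans inf_le_right (le_trans inf_le_left (lcc inf_le_right))
    rw [ec, dm_sup]; exact le_inf hz1 hz2
  have hz : z = ⊥ := by
    refine eqbot (le_trans inf_le_right inf_le_right) ?_
    rw [dm_sup]; exact le_inf hzb hzc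
  rw [h1, hz, sup_bot_eq]

lemma fh_sup {a b c : α} (hb : Cm a b) (hc : Cm a c) :
    a ⊔ (b ⊓ c) = (a ⊔ b) ⊓ (a ⊔ c) := by
  have h := congrArg (·ᶜ) (fh_inf hb.complr.compll hc.complr.compll)
  simpa only [dm_inf, dm_sup, cc] using h

lemma fh_cross {a b c : α} (hab : Cm a b) (hac : Cm a c) :
    c ⊓ (a ⊔ b) = (c ⊓ a) ⊔ (c ⊓ b) := by
  have hd : (c ⊓ a) ⊔ (c ⊓ b) ≤ c ⊓ (a ⊔ b) :=
    sup_le (le_inf inf_le_left (le_sup_of_le_left inf_le_right))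
      (le_inf inf_le_left (le_sup_of_le_right inf_le_right))
  have h1 := om hd
  set z := ((c ⊓ a) ⊔ (c ⊓ b))ᶜ ⊓ (c ⊓ (a ⊔ b)) with hzdef
  have hzc : z ≤ c := le_trans inf_le_right inf_le_left
  have hza : z ≤ aᶜ := by
    have h2 : z ≤ c ⊓ (c ⊓ a)ᶜ :=
      le_inf hzc (le_trans inf_le_left (anti le_sup_left))
    have h3 : c ⊓ (c ⊓ a)ᶜ ≤ aᶜ := by
      rw [dm_inf, fh_inf (cm_compl c) hac.symm.complr, infc, bot_sup_eq]
      exact inf_le_right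
    exact le_trans h2 h3
  have hzb : z ≤ b := by
    have h4 : aᶜ ⊓ (a ⊔ b) = aᶜ ⊓ b := by
      rw [fh_inf (cm_compl a).symm hab.compll, inf_comm aᶜ a, infc, bot_sup_eq]
    have h5 : z ≤ aᶜ ⊓ (a ⊔ b) := le_inf hza (le_trans inf_le_right inf_le_right)
    rw [h4] at h5
    exact le_trans h5 inf_le_right
  have hz : z = ⊥ :=
    eqbot (le_inf hzc hzb) (le_trans inf_le_left (anti le_sup_right))
  rw [h1, hz, sup_bot_eq]

lemma cm_sup {a b c : α} (hb : Cm a b) (hc : Cm a c) : Cm a (b ⊔ c) := by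
  apply Cm.symm
  have eb : b = (b ⊓ a) ⊔ (b ⊓ aᶜ) := hb.symm
  have ec : c = (c ⊓ a) ⊔ (c ⊓ aᶜ) := hc.symm
  refine le_antisymm ?_ (sup_le inf_le_left inf_le_left)
  calc b ⊔ c = ((b ⊓ a) ⊔ (b ⊓ aᶜ)) ⊔ ((c ⊓ a) ⊔ (c ⊓ aᶜ)) := by rw [← eb, ← ec]
    _ ≤ ((b ⊔ c) ⊓ a) ⊔ ((b ⊔ c) ⊓ aᶜ) :=
      sup_le
        (sup_le (le_sup_of_le_left (inf_le_inf_right a le_sup_left))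
          (le_sup_of_le_right (inf_le_inf_right aᶜ le_sup_left)))
        (sup_le (le_sup_of_le_left (inf_le_inf_right a le_sup_right))
          (le_sup_of_le_right (inf_le_inf_right aᶜ le_sup_right)))

lemma cm_inf {a b c : α} (hb : Cm a b) (hc : Cm a c) : Cm a (b ⊓ c) := by
  have h := (cm_sup hb.complr hc.complr).complr
  rwa [dm_sup, cc, cc] at h

lemma sup_inf_compl {a y : α} (h : Cm a y) : a ⊔ (aᶜ ⊓ y) = a ⊔ y := by
  have h1 : a ⊔ y = a ⊔ (aᶜ ⊓ (a ⊔ y)) := om le_sup_left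
  have h2 : aᶜ ⊓ (a ⊔ y) = aᶜ ⊓ y := by
    rw [fh_inf (cm_compl a).symm h.compll, inf_comm aᶜ a, infc, bot_sup_eq]
  rw [h1, h2]

end OMLx

open OMLx in
theorem stmt6 {α : Type*} [OrthomodularLattice α] (a b c : α) (hab : a = (a ⊓ b) ⊔ (a ⊓ bᶜ)) (hac : a = (a ⊓ c) ⊔ (a ⊓ cᶜ)) :
    (((a ⊓ b) ⊔ (a ⊓ bᶜ) ⊔ (aᶜ ⊓ (a ⊔ b))) ⊓ c) ⊔ (((a ⊓ b) ⊔ (a ⊓ bᶜ) ⊔ (aᶜ ⊓ (a ⊔ b))) ⊓ cᶜ) ⊔ (((a ⊓ b) ⊔ (a ⊓ bᶜ) ⊔ (aᶜ ⊓ (a ⊔ b)))ᶜ ⊓ (((a ⊓ b) ⊔ (a ⊓ bᶜ) ⊔ (aᶜ ⊓ (a ⊔ b))) ⊔ c)) =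
      (a ⊓ ((b ⊓ c) ⊔ (b ⊓ cᶜ) ⊔ (bᶜ ⊓ (b ⊔ c)))) ⊔ (a ⊓ ((b ⊓ c) ⊔ (b ⊓ cᶜ) ⊔ (bᶜ ⊓ (b ⊔ c)))ᶜ) ⊔ (aᶜ ⊓ (a ⊔ ((b ⊓ c) ⊔ (b ⊓ cᶜ) ⊔ (bᶜ ⊓ (b ⊔ c))))) := by
  have hab' : Cm a b := hab
  have hac' : Cm a c := hac
  -- left element is a ⊔ b
  have hL : (a ⊓ b) ⊔ (a ⊓ bᶜ) ⊔ (aᶜ ⊓ (a ⊔ b)) = a ⊔ b := by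
    rw [← hab]; exact (om le_sup_left).symm
  set R := (b ⊓ c) ⊔ (b ⊓ cᶜ) ⊔ (bᶜ ⊓ (b ⊔ c)) with hRdef
  have hcmR : Cm a R := by
    rw [hRdef]
    exact cm_sup (cm_sup (cm_inf hab' hac') (cm_inf hab' hac'.complr))
      (cm_inf hab'.complr (cm_sup hab' hac'))
  have hRHS : (a ⊓ R) ⊔ (a ⊓ Rᶜ) ⊔ (aᶜ ⊓ (a ⊔ R)) = a ⊔ R := by
    rw [← hcmR.eq]; exact (om le_sup_left).symm
  rw [hL, hRHS]
  -- distribute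
  have h1 : (a ⊔ b) ⊓ c = (c ⊓ a) ⊔ (c ⊓ b) := by
    rw [inf_comm]; exact fh_cross hab' hac'
  have h2 : (a ⊔ b) ⊓ cᶜ = (cᶜ ⊓ a) ⊔ (cᶜ ⊓ b) := by
    rw [inf_comm]; exact fh_cross hab' hac'.complr
  rw [h1, h2, dm_sup]
  -- key identity
  have hWcm : Cm a (a ⊔ b ⊔ c) := cm_sup (cm_sup (cm_self a) hab') hac'
  have hBW : Cm a (bᶜ ⊓ (a ⊔ b ⊔ c)) := cm_inf hab'.complr hWcm
  have key : a ⊔ ((aᶜ ⊓ bᶜ) ⊓ (a ⊔ b ⊔ c)) = a ⊔ (bᶜ ⊓ (b ⊔ c)) := by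
    rw [inf_assoc, sup_inf_compl hBW, fh_sup hab'.complr hWcm,
      fh_sup hab'.complr (cm_sup hab' hac')]
    congr 1
    rw [← sup_assoc, ← sup_assoc, sup_idem, sup_assoc]
  have ha' : (c ⊓ a) ⊔ (cᶜ ⊓ a) = a := by
    rw [inf_comm c a, inf_comm cᶜ a]; exact hac.symm
  calc ((c ⊓ a) ⊔ (c ⊓ b)) ⊔ ((cᶜ ⊓ a) ⊔ (cᶜ ⊓ b)) ⊔ ((aᶜ ⊓ bᶜ) ⊓ (a ⊔ b ⊔ c))
      = (((c ⊓ a) ⊔ (cᶜ ⊓ a)) ⊔ ((c ⊓ b) ⊔ (cᶜ ⊓ b))) ⊔ ((aᶜ ⊓ bᶜ) ⊓ (a ⊔ b ⊔ c)) := by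
        ac_rfl
    _ = (a ⊔ ((b ⊓ c) ⊔ (b ⊓ cᶜ))) ⊔ ((aᶜ ⊓ bᶜ) ⊓ (a ⊔ b ⊔ c)) := by
        rw [ha', inf_comm c b, inf_comm cᶜ b]
    _ = ((b ⊓ c) ⊔ (b ⊓ cᶜ)) ⊔ (a ⊔ ((aᶜ ⊓ bᶜ) ⊓ (a ⊔ b ⊔ c))) := by ac_rfl
    _ = ((b ⊓ c) ⊔ (b ⊓ cᶜ)) ⊔ (a ⊔ (bᶜ ⊓ (b ⊔ c))) := by rw [key]
    _ = a ⊔ R := by rw [hRdef]; ac_rfl
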